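/- arXiv:2501.17473 — 3 statements merged into one kernel-verified Lean document; each statement's English description precedes it below -/
import Mathlib

section
/- The value-iteration operator preserves monotonicity in AoI: if V : ℕ⁺ × ℕ⁺ → ℝ is increasing in δ for each τ, and f is increasing, then the function (τ,δ) ↦ min_{u∈{0,1,2}} Q(τ,δ,u) (with Q defined from V by the wearing-channel one-step Bellman recursion) is also increasing in δ for each τ. -/
/-- Value iteration preserves monotonicity in AoI: the pointwise minimum of the three
Bellman operands is increasing in `δ` for each fixed `τ`. -/
theorem value_iteration_preserves_AoI_monotonicity
    (τD δR : ℕ) (hτD : 1 ≤ τD) (hδR : 1 ≤ δR)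
    (θ : ℕ → ℝ) (hθ : ∀ τ, θ τ ∈ Set.Icc (0 : ℝ) 1)
    (f : ℕ → ℝ) (hf : Monotone f)
    (V : ℕ → ℕ → ℝ) (hV : ∀ τ δ δ', δ ≤ δ' → V τ δ ≤ V τ δ') :
    ∀ τ δ δ', δ ≤ δ' →
      min (min (f δ + V (τ + 1) (δ + 1))
            (f δ + θ τ * V (τ + τD) 1 + (1 - θ τ) * V (τ + τD) (δ + 1)))
          ((∑ i ∈ Finset.range δR, f (δ + i)) + V 1 (δ + δR)) ≤
      min (min (f δ' + V (τ + 1) (δ' + 1))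
            (f δ' + θ τ * V (τ + τD) 1 + (1 - θ τ) * V (τ + τD) (δ' + 1)))
          ((∑ i ∈ Finset.range δR, f (δ' + i)) + V 1 (δ' + δR)) := by
  intro τ δ δ' h
  refine min_le_min (min_le_min ?_ ?_) ?_
  · exact add_le_add (hf h) (hV _ _ _ (by omega))
  · have h1 : 1 - θ τ ≥ 0 := by have := (hθ τ).2; linarith
    have := mul_le_mul_of_nonneg_left (hV (τ + τD) (δ + 1) (δ' + 1) (by omega)) h1
    linarith [hf h]
  · refine add_le_add ?_ (hV _ _ _ (by omega))
    exact Finset.sum_le_sum fun i _ => hf (by omega)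
end

section
/- Key induction step for submodularity (Case 1): suppose ψ_V(τ₀,δ,δ') := (1−θ(τ₀))·(V(τ₀+τ_D, δ'+1) − V(τ₀+τ_D, δ+1)) − (V(τ₀+1, δ'+1) − V(τ₀+1, δ+1)) ≤ 0 for all τ₀ and δ' ≥ δ, θ is decreasing, V is increasing in δ, and f is increasing. Then −θ(τ)(f(δ') − f(δ)) + (1−θ(τ))·(V(τ+1+τ_D, δ'+1) − V(τ+1+τ_D, δ+1)) − (V(τ+2, δ'+1) − V(τ+2, δ+1)) ≤ 0 for all τ and δ' ≥ δ. -/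
/-- Key induction step for submodularity of the Q-factor (Case 1). -/
theorem submodularity_induction_case1
    (τD : ℕ) (hτD : 1 ≤ τD)
    (θ : ℕ → ℝ) (hθ : ∀ τ, θ τ ∈ Set.Icc (0 : ℝ) 1) (hθdec : Antitone θ)
    (f : ℕ → ℝ) (hf : Monotone f)
    (V : ℕ → ℕ → ℝ) (hV : ∀ τ δ δ', δ ≤ δ' → V τ δ ≤ V τ δ')
    (hψ : ∀ τ₀ δ δ', δ ≤ δ' →
      (1 - θ τ₀) * (V (τ₀ + τD) (δ' + 1) - V (τ₀ + τD) (δ + 1)) -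
        (V (τ₀ + 1) (δ' + 1) - V (τ₀ + 1) (δ + 1)) ≤ 0) :
    ∀ τ δ δ', δ ≤ δ' →
      -θ τ * (f δ' - f δ) +
        (1 - θ τ) * (V (τ + 1 + τD) (δ' + 1) - V (τ + 1 + τD) (δ + 1)) -
        (V (τ + 2) (δ' + 1) - V (τ + 2) (δ + 1)) ≤ 0 := by
  intro τ δ δ' h
  have hψ' := hψ (τ + 1) δ δ' h
  have hD : 0 ≤ V (τ + 1 + τD) (δ' + 1) - V (τ + 1 + τD) (δ + 1) :=
    sub_nonneg.mpr (hV _ _ _ (by omega))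
  have hθle : 1 - θ (τ + 1) ≤ 1 := by linarith [(hθ (τ + 1)).1]
  have hθmono : 1 - θ τ ≤ 1 - θ (τ + 1) := by
    linarith [hθdec (Nat.le_succ τ)]
  have h1 : (1 - θ τ) * (V (τ + 1 + τD) (δ' + 1) - V (τ + 1 + τD) (δ + 1)) ≤
      (1 - θ (τ + 1)) * (V (τ + 1 + τD) (δ' + 1) - V (τ + 1 + τD) (δ + 1)) :=
    mul_le_mul_of_nonneg_right hθmono hD
  have hθf : -θ τ * (f δ' - f δ) ≤ 0 := by
    have := (hθ τ).1
    have := hf h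
    nlinarith
  have : τ + 1 + 1 = τ + 2 := by ring
  rw [this] at hψ'
  linarith
end

section
/- Key induction step for submodularity (Case 2): under the same hypotheses ψ_V(τ₀,δ,δ') ≤ 0 for all τ₀ and δ' ≥ δ, with θ decreasing, f increasing, V increasing in δ, the quantity −θ(τ)(f(δ')−f(δ)) + (1−θ(τ))ψ_V(τ+τ_D, δ, δ') + ψ_V(τ+1, δ, δ') is ≤ 0; consequently the two-success-branch expression −θ(τ)(f(δ')−f(δ)) + (1−θ(τ))(1−θ(τ+τ_D))·(V(τ+2τ_D,δ'+1) − V(τ+2τ_D,δ+1)) − (V(τ+2,δ'+1) − V(τ+2,δ+1)) ≤ 0. -/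
/-- Key induction step for submodularity of the Q-factor (Case 2), with
`ψ_V(τ₀,δ,δ') := (1−θ(τ₀))(V(τ₀+τ_D,δ'+1) − V(τ₀+τ_D,δ+1)) − (V(τ₀+1,δ'+1) − V(τ₀+1,δ+1))`. -/
theorem submodularity_induction_case2
    (τD : ℕ) (hτD : 1 ≤ τD)
    (θ : ℕ → ℝ) (hθ : ∀ τ, θ τ ∈ Set.Icc (0 : ℝ) 1) (hθdec : Antitone θ)
    (f : ℕ → ℝ) (hf : Monotone f)
    (V : ℕ → ℕ → ℝ) (hV : ∀ τ δ δ', δ ≤ δ' → V τ δ ≤ V τ δ')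
    (ψ : ℕ → ℕ → ℕ → ℝ)
    (hψdef : ∀ τ₀ δ δ', ψ τ₀ δ δ' =
      (1 - θ τ₀) * (V (τ₀ + τD) (δ' + 1) - V (τ₀ + τD) (δ + 1)) -
        (V (τ₀ + 1) (δ' + 1) - V (τ₀ + 1) (δ + 1)))
    (hψ : ∀ τ₀ δ δ', δ ≤ δ' → ψ τ₀ δ δ' ≤ 0) :
    ∀ τ δ δ', δ ≤ δ' →
      (-θ τ * (f δ' - f δ) + (1 - θ τ) * ψ (τ + τD) δ δ' + ψ (τ + 1) δ δ' ≤ 0) ∧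
      (-θ τ * (f δ' - f δ) +
        (1 - θ τ) * (1 - θ (τ + τD)) *
          (V (τ + 2 * τD) (δ' + 1) - V (τ + 2 * τD) (δ + 1)) -
        (V (τ + 2) (δ' + 1) - V (τ + 2) (δ + 1)) ≤ 0) := by
  intro τ δ δ' hδ
  obtain ⟨hθ0, hθ1⟩ := hθ τ
  have h1θ : (0:ℝ) ≤ 1 - θ τ := by linarith
  have hfm : f δ ≤ f δ' := hf hδ
  have hterm1 : -θ τ * (f δ' - f δ) ≤ 0 := by nlinarith
  have h2 : (1 - θ τ) * ψ (τ + τD) δ δ' ≤ 0 :=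
    mul_nonpos_of_nonneg_of_nonpos h1θ (hψ _ _ _ hδ)
  have h3 : ψ (τ + 1) δ δ' ≤ 0 := hψ _ _ _ hδ
  have hfirst : -θ τ * (f δ' - f δ) + (1 - θ τ) * ψ (τ + τD) δ δ' + ψ (τ + 1) δ δ' ≤ 0 := by
    linarith
  refine ⟨hfirst, ?_⟩
  have hdiff : V (τ + τD + 1) (δ + 1) ≤ V (τ + τD + 1) (δ' + 1) :=
    hV _ _ _ (by omega)
  have hθstep : θ (τ + 1) ≤ θ τ := hθdec (Nat.le_succ τ)
  have e1 := hψdef (τ + τD) δ δ'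
  have e2 := hψdef (τ + 1) δ δ'
  have hrw1 : τ + τD + τD = τ + 2 * τD := by ring
  have hrw2 : τ + 1 + 1 = τ + 2 := by ring
  have hrw3 : τ + 1 + τD = τ + τD + 1 := by ring
  rw [hrw1] at e1
  rw [hrw2, hrw3] at e2
  nlinarith [mul_nonneg (sub_nonneg.mpr hθstep) (sub_nonneg.mpr hdiff)]
end
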